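/- arXiv:2204.05466 — 4 statements merged into one kernel-verified Lean document; each statement's English description precedes it below -/
import Mathlib

section
/- The independent entropy-regularized NPG update guarantees, for every t ≥ 0, Φ_τ(π^(t+1)) − Φ_τ(π^(t)) ≥ (1/η − min{√N, 2Φ_max} − τ) · J(π^(t+1), π^(t)). -/
/-!
Write `p = π t` and `q = π (t + 1)`. For each agent the update is a step of entropy-regularized
mirror descent, which gives the exact identity
`⟨q_k - p_k, r_k⟩ + τ (H(q_k) - H(p_k)) = J(q_k, p_k) / η - τ KL(q_k ‖ p_k)`.
The change `Φ(q) - Φ(p)` of the potential differs from `∑ₖ ⟨q_k - p_k, r_k⟩` by an interaction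
term, which is bounded below in two ways. Switching the agents from `p` to `q` one at a time and
using the potential property, the `k`-th summand compares `u_k` under two product policies that
differ only in agents other than `k`; the Pinsker-type bound `‖μ - ν‖₁² ≤ 2 J(μ, ν)` and
Cauchy–Schwarz bound the total by `√N J`. Alternatively, writing `q_k = p_k e^{y_k}` pointwise,
`e^{∑ y} ≥ 1 + ∑ y` bounds the interaction term by `Φmax J`. As `J` is additive over independent
agents and `KL ≤ J`, the claim follows.
-/

open Finset

noncomputable section

/-- A probability distribution on a finite action set. -/
def IsDist {A : Type*} [Fintype A] (p : A → ℝ) : Prop :=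
  (∀ a, 0 ≤ p a) ∧ ∑ a, p a = 1

/-- Shannon entropy of a distribution. -/
def entropy {A : Type*} [Fintype A] (p : A → ℝ) : ℝ :=
  -∑ a, p a * Real.log (p a)

/-- Kullback-Leibler divergence on a finite set. -/
def KLdiv {A : Type*} [Fintype A] (p q : A → ℝ) : ℝ :=
  ∑ a, p a * (Real.log (p a) - Real.log (q a))

/-- Jeffrey divergence: the symmetrized KL divergence. -/
def Jdiv {A : Type*} [Fintype A] (p q : A → ℝ) : ℝ :=
  KLdiv p q + KLdiv q p

/-- Joint product distribution induced by a product policy. -/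
def jointPmf {N : ℕ} {A : Type*} [Fintype A] (π : Fin N → A → ℝ) :
    (Fin N → A) → ℝ :=
  fun a => ∏ i, π i (a i)

/-- Expectation of `f` under the product policy `π`. -/
def expVal {N : ℕ} {A : Type*} [Fintype A] (π : Fin N → A → ℝ)
    (f : (Fin N → A) → ℝ) : ℝ :=
  ∑ a, jointPmf π a * f a

/-- Point mass at action `a`. -/
def pmfOf {A : Type*} [DecidableEq A] (a : A) : A → ℝ :=
  fun b => if b = a then 1 else 0

/-- Marginalized utility `r_i^π(a) = E_{a_{-i} ∼ π_{-i}}[u_i(a, a_{-i})]`. -/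
def margU {N : ℕ} {A : Type*} [Fintype A] [DecidableEq A]
    (u : Fin N → (Fin N → A) → ℝ) (π : Fin N → A → ℝ) (i : Fin N) (a : A) : ℝ :=
  expVal (Function.update π i (pmfOf a)) (u i)

/-- Entropy-regularized utility `u_{i,τ}(π) = u_i(π) + τ H(π_i)`. -/
def uReg {N : ℕ} {A : Type*} [Fintype A] (u : Fin N → (Fin N → A) → ℝ) (τ : ℝ)
    (i : Fin N) (π : Fin N → A → ℝ) : ℝ :=
  expVal π (u i) + τ * entropy (π i)

/-- `QRE-gap_τ(π)`. -/
def QREgap {N : ℕ} {A : Type*} [Fintype A] [DecidableEq A]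
    (u : Fin N → (Fin N → A) → ℝ) (τ : ℝ) (π : Fin N → A → ℝ) : ℝ :=
  sSup {x | ∃ (i : Fin N) (p : A → ℝ), IsDist p ∧
    x = uReg u τ i (Function.update π i p) - uReg u τ i π}

/-- `NE-gap(π)`. -/
def NEgap {N : ℕ} {A : Type*} [Fintype A] [DecidableEq A]
    (u : Fin N → (Fin N → A) → ℝ) (π : Fin N → A → ℝ) : ℝ :=
  sSup {x | ∃ (i : Fin N) (p : A → ℝ), IsDist p ∧
    x = expVal (Function.update π i p) (u i) - expVal π (u i)}

/-- Entropy-regularized potential `Φ_τ(π) = Φ(π) + τ ∑_i H(π_i)`. -/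
def regPot {N : ℕ} {A : Type*} [Fintype A] (Φ : (Fin N → A) → ℝ) (τ : ℝ)
    (π : Fin N → A → ℝ) : ℝ :=
  expVal π Φ + τ * ∑ i, entropy (π i)

/-- `Φ` is a potential function for the game with utilities `u`. -/
def IsPotential {N : ℕ} {A : Type*} [Fintype A] [DecidableEq A]
    (u : Fin N → (Fin N → A) → ℝ) (Φ : (Fin N → A) → ℝ) : Prop :=
  ∀ (i : Fin N) (a : Fin N → A) (a' : A),
    u i a - u i (Function.update a i a') = Φ a - Φ (Function.update a i a')

/-- The independent entropy-regularized NPG update rule. -/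
def NPGstep {N : ℕ} {A : Type*} [Fintype A] [DecidableEq A]
    (u : Fin N → (Fin N → A) → ℝ) (τ η : ℝ) (π : ℕ → Fin N → A → ℝ) : Prop :=
  ∀ t i a, π (t+1) i a =
    π t i a ^ (1 - η * τ) * Real.exp (η * margU u (π t) i a) /
      ∑ a', π t i a' ^ (1 - η * τ) * Real.exp (η * margU u (π t) i a')

/-- Best-response policy `π_i^⋆(a) ∝ exp(r_i^π(a)/τ)`. -/
def bestResp {N : ℕ} {A : Type*} [Fintype A] [DecidableEq A]
    (u : Fin N → (Fin N → A) → ℝ) (τ : ℝ) (π : Fin N → A → ℝ) (i : Fin N) :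
    A → ℝ :=
  fun a => Real.exp (margU u π i a / τ) / ∑ a', Real.exp (margU u π i a' / τ)


section Divergence

variable {S : Type*} [Fintype S]

lemma Jdiv_eq_sum (μ ν : S → ℝ) :
    Jdiv μ ν = ∑ s, (μ s - ν s) * (Real.log (μ s) - Real.log (ν s)) := by
  rw [Jdiv, KLdiv, KLdiv, ← sum_add_distrib]
  exact sum_congr rfl fun s _ => by ring

lemma sub_le_mul_log_sub_log {x y : ℝ} (hx : 0 < x) (hy : 0 < y) :
    x - y ≤ x * (Real.log x - Real.log y) := by
  have h := Real.one_sub_inv_le_log_of_pos (div_pos hx hy)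
  rw [inv_div, Real.log_div hx.ne' hy.ne'] at h
  have h' := mul_le_mul_of_nonneg_left h hx.le
  rwa [mul_sub, mul_one, mul_div_cancel₀ _ hx.ne'] at h'

lemma sq_sub_le_max_mul_sub_mul_log_sub_log {x y : ℝ} (hx : 0 < x) (hy : 0 < y) :
    (x - y) ^ 2 ≤ max x y * ((x - y) * (Real.log x - Real.log y)) := by
  wlog hyx : y ≤ x generalizing x y
  · have h := this hy hx (le_of_not_ge hyx)
    rw [max_comm]
    linarith
  rw [max_eq_left hyx]
  nlinarith [mul_le_mul_of_nonneg_left (sub_le_mul_log_sub_log hx hy) (sub_nonneg.2 hyx)]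

lemma sub_mul_log_sub_log_nonneg {x y : ℝ} (hx : 0 < x) (hy : 0 < y) :
    0 ≤ (x - y) * (Real.log x - Real.log y) :=
  (mul_nonneg_iff_of_pos_left (lt_max_of_lt_left hx)).1
    ((sq_nonneg _).trans (sq_sub_le_max_mul_sub_mul_log_sub_log hx hy))

variable {μ ν : S → ℝ}

lemma Jdiv_nonneg (hμ : ∀ s, 0 < μ s) (hν : ∀ s, 0 < ν s) : 0 ≤ Jdiv μ ν := by
  rw [Jdiv_eq_sum]
  exact sum_nonneg fun s _ => sub_mul_log_sub_log_nonneg (hμ s) (hν s)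

lemma KLdiv_nonneg (hμ : ∀ s, 0 < μ s) (hν : ∀ s, 0 < ν s) (hμν : ∑ s, μ s = ∑ s, ν s) :
    0 ≤ KLdiv μ ν :=
  calc (0 : ℝ) = ∑ s, (μ s - ν s) := by rw [sum_sub_distrib, hμν, sub_self]
    _ ≤ KLdiv μ ν := sum_le_sum fun s _ => sub_le_mul_log_sub_log (hμ s) (hν s)

lemma KLdiv_le_Jdiv (hμ : ∀ s, 0 < μ s) (hν : ∀ s, 0 < ν s) (hμν : ∑ s, μ s = ∑ s, ν s) :
    KLdiv μ ν ≤ Jdiv μ ν :=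
  le_add_of_nonneg_right (KLdiv_nonneg hν hμ hμν.symm)

lemma sq_sum_abs_sub_le_two_mul_Jdiv (hμ : ∀ s, 0 < μ s) (hν : ∀ s, 0 < ν s)
    (hμ1 : ∑ s, μ s = 1) (hν1 : ∑ s, ν s = 1) :
    (∑ s, |μ s - ν s|) ^ 2 ≤ 2 * Jdiv μ ν := by
  have hmax : ∑ s, max (μ s) (ν s) ≤ 2 :=
    calc ∑ s, max (μ s) (ν s) ≤ ∑ s, (μ s + ν s) :=
          sum_le_sum fun s _ => max_le_add_of_nonneg (hμ s).le (hν s).le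
      _ = 2 := by rw [sum_add_distrib, hμ1, hν1]; norm_num
  calc (∑ s, |μ s - ν s|) ^ 2 ≤ (∑ s, max (μ s) (ν s)) * Jdiv μ ν := by
        rw [Jdiv_eq_sum]
        refine sum_sq_le_sum_mul_sum_of_sq_le_mul _
          (fun s _ => (hμ s).le.trans (le_max_left _ _))
          (fun s _ => sub_mul_log_sub_log_nonneg (hμ s) (hν s)) fun s _ => ?_
        rw [sq_abs]
        exact sq_sub_le_max_mul_sub_mul_log_sub_log (hμ s) (hν s)
    _ ≤ 2 * Jdiv μ ν := mul_le_mul_of_nonneg_right hmax (Jdiv_nonneg hμ hν)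

lemma sum_abs_sub_le_sqrt_two_mul_Jdiv (hμ : ∀ s, 0 < μ s) (hν : ∀ s, 0 < ν s)
    (hμ1 : ∑ s, μ s = 1) (hν1 : ∑ s, ν s = 1) :
    ∑ s, |μ s - ν s| ≤ √(2 * Jdiv μ ν) :=
  Real.le_sqrt_of_sq_le (sq_sum_abs_sub_le_two_mul_Jdiv hμ hν hμ1 hν1)

end Divergence

section Coordinate

variable {ι A : Type*} [Fintype ι] [DecidableEq ι] [Fintype A]

/-- The involution `(a, b) ↦ (a[k ↦ b], a k)` of `(ι → A) × A` exchanges the roles of `g`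
and `c`. -/
lemma sum_apply_mul_mul_sum_eq (k : ι) (g c : A → ℝ) {h : (ι → A) → ℝ}
    (hh : ∀ a z, h (Function.update a k z) = h a) :
    (∑ a, g (a k) * h a) * ∑ b, c b = (∑ b, g b) * ∑ a, c (a k) * h a := by
  let σ : (ι → A) × A → (ι → A) × A := fun x => (Function.update x.1 k x.2, x.1 k)
  have hσ : Function.Involutive σ := fun x => by simp [σ]
  have hswap := Equiv.sum_comp hσ.toPerm fun x => g x.2 * c (x.1 k) * h x.1
  simp only [Function.Involutive.coe_toPerm, σ, Function.update_self, hh,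
    Fintype.sum_prod_type] at hswap
  calc (∑ a, g (a k) * h a) * ∑ b, c b = ∑ a, ∑ b, g (a k) * c b * h a := by
        rw [sum_mul_sum]
        exact sum_congr rfl fun a _ => sum_congr rfl fun b _ => by ring
    _ = ∑ a, ∑ b, g b * c (a k) * h a := hswap
    _ = (∑ b, g b) * ∑ a, c (a k) * h a := by
        rw [sum_comm, sum_mul_sum]
        exact sum_congr rfl fun b _ => sum_congr rfl fun a _ => by ring

lemma sum_apply_mul_eq_zero (k : ι) {v : A → ℝ} (hv : ∑ b, v b = 0) {h : (ι → A) → ℝ}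
    (hh : ∀ a z, h (Function.update a k z) = h a) :
    ∑ a, v (a k) * h a = 0 := by
  classical
  rcases isEmpty_or_nonempty A with hA | hA
  · exact sum_eq_zero fun a _ => isEmptyElim (a k)
  · obtain ⟨b₀⟩ := hA
    simpa [hv] using sum_apply_mul_mul_sum_eq k v (Pi.single b₀ 1) hh

end Coordinate

lemma prod_erase_apply_update {ι A : Type*} [Fintype ι] [DecidableEq ι] (w : ι → A → ℝ) (k : ι)
    (a : ι → A) (z : A) :
    ∏ j ∈ univ.erase k, w j (Function.update a k z j) = ∏ j ∈ univ.erase k, w j (a j) :=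
  prod_congr rfl fun j hj => by rw [Function.update_of_ne (ne_of_mem_erase hj)]

section ProductPolicy

variable {N : ℕ} {A : Type*} [Fintype A]

lemma sum_jointPmf (w : Fin N → A → ℝ) : ∑ a, jointPmf w a = ∏ j, ∑ b, w j b := by
  simp only [jointPmf]
  rw [prod_univ_sum (fun _ => univ) w, Fintype.piFinset_univ]

lemma sum_jointPmf_eq_one {w : Fin N → A → ℝ} (hw1 : ∀ j, ∑ b, w j b = 1) :
    ∑ a, jointPmf w a = 1 := by
  simp [sum_jointPmf, hw1]

lemma jointPmf_pos {w : Fin N → A → ℝ} (hw : ∀ j b, 0 < w j b) (a : Fin N → A) :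
    0 < jointPmf w a :=
  prod_pos fun j _ => hw j (a j)

lemma jointPmf_update (w : Fin N → A → ℝ) (k : Fin N) (v : A → ℝ) (a : Fin N → A) :
    jointPmf (Function.update w k v) a = v (a k) * ∏ j ∈ univ.erase k, w j (a j) := by
  rw [jointPmf, ← mul_prod_erase _ _ (mem_univ k), Function.update_self]
  congr 1
  exact prod_congr rfl fun j hj => by rw [Function.update_of_ne (ne_of_mem_erase hj)]

lemma expVal_sub (w : Fin N → A → ℝ) (f g : (Fin N → A) → ℝ) :
    expVal w (f - g) = expVal w f - expVal w g := by
  simp only [expVal, Pi.sub_apply, mul_sub, sum_sub_distrib]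

lemma expVal_update (w : Fin N → A → ℝ) (k : Fin N) (v : A → ℝ) (f : (Fin N → A) → ℝ) :
    expVal (Function.update w k v) f
      = ∑ a, v (a k) * ((∏ j ∈ univ.erase k, w j (a j)) * f a) := by
  simp only [expVal, jointPmf_update, mul_assoc]

lemma expVal_update_eq_zero (w : Fin N → A → ℝ) (k : Fin N) {v : A → ℝ} (hv : ∑ b, v b = 0)
    {f : (Fin N → A) → ℝ} (hf : ∀ a z, f (Function.update a k z) = f a) :
    expVal (Function.update w k v) f = 0 := by
  rw [expVal_update]
  exact sum_apply_mul_eq_zero k hv fun a z => by rw [prod_erase_apply_update, hf]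

lemma expVal_update_eq_sum [DecidableEq A] (w : Fin N → A → ℝ) (k : Fin N) (v : A → ℝ)
    (f : (Fin N → A) → ℝ) :
    expVal (Function.update w k v) f = ∑ b, v b * expVal (Function.update w k (pmfOf b)) f := by
  simp only [expVal_update, pmfOf, mul_sum, ite_mul, one_mul, zero_mul, mul_ite, mul_zero]
  rw [sum_comm]
  exact sum_congr rfl fun a _ => by simp

lemma expVal_apply {w : Fin N → A → ℝ} (hw : ∀ j, ∑ b, w j b = 1) (k : Fin N) (ℓ : A → ℝ) :
    expVal w (fun a => ℓ (a k)) = ∑ b, w k b * ℓ b := by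
  have hfactor := sum_apply_mul_mul_sum_eq k (fun b => w k b * ℓ b) (w k)
    (h := fun a => ∏ j ∈ univ.erase k, w j (a j)) (prod_erase_apply_update w k)
  have hjoint : ∑ a : Fin N → A, w k (a k) * ∏ j ∈ univ.erase k, w j (a j) = 1 := by
    simp only [← jointPmf_update, Function.update_eq_self, sum_jointPmf, hw,
      prod_const_one]
  rw [hw, hjoint, mul_one, mul_one] at hfactor
  conv_lhs => rw [← Function.update_eq_self k w, expVal_update]
  rw [← hfactor]
  exact sum_congr rfl fun a _ => by ring

lemma Jdiv_jointPmf {w w' : Fin N → A → ℝ} (hw : ∀ j b, 0 < w j b) (hw1 : ∀ j, ∑ b, w j b = 1)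
    (hw' : ∀ j b, 0 < w' j b) (hw'1 : ∀ j, ∑ b, w' j b = 1) :
    Jdiv (jointPmf w) (jointPmf w') = ∑ j, Jdiv (w j) (w' j) := by
  have hlog : ∀ a, Real.log (jointPmf w a) - Real.log (jointPmf w' a)
      = ∑ j, (Real.log (w j (a j)) - Real.log (w' j (a j))) := fun a => by
    rw [jointPmf, jointPmf, Real.log_prod fun j _ => (hw j (a j)).ne',
      Real.log_prod fun j _ => (hw' j (a j)).ne', sum_sub_distrib]
  have hsplit : ∀ j, Jdiv (w j) (w' j)
      = expVal w (fun a => Real.log (w j (a j)) - Real.log (w' j (a j)))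
        - expVal w' (fun a => Real.log (w j (a j)) - Real.log (w' j (a j))) := fun j => by
    rw [expVal_apply hw1 j (fun b => Real.log (w j b) - Real.log (w' j b)),
      expVal_apply hw'1 j (fun b => Real.log (w j b) - Real.log (w' j b)), Jdiv_eq_sum,
      ← sum_sub_distrib]
    exact sum_congr rfl fun b _ => by ring
  simp only [hsplit, expVal, ← sum_sub_distrib, Jdiv_eq_sum, hlog, mul_sum]
  rw [sum_comm]
  exact sum_congr rfl fun a _ => sum_congr rfl fun j _ => by ring

end ProductPolicy

section Hybrid

variable {N : ℕ} {A : Type*}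

def hybrid (p q : Fin N → A → ℝ) (m : ℕ) : Fin N → A → ℝ :=
  fun j => if (j : ℕ) < m then q j else p j

variable {p q : Fin N → A → ℝ}

lemma hybrid_zero : hybrid p q 0 = p := by
  funext j
  simp [hybrid]

lemma hybrid_card : hybrid p q N = q := by
  funext j
  simp [hybrid]

lemma hybrid_succ (k : Fin N) : hybrid p q (k + 1) = Function.update (hybrid p q k) k (q k) := by
  funext j
  rcases lt_trichotomy (j : ℕ) k with h | h | h
  · rw [Function.update_of_ne (Fin.ne_of_lt h)]
    simp [hybrid, h, Nat.lt_succ_of_lt h]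
  · obtain rfl := Fin.ext h
    simp [hybrid]
  · rw [Function.update_of_ne (Fin.ne_of_gt h)]
    simp [hybrid, h.not_gt, show ¬(j : ℕ) < k + 1 by omega]

lemma update_hybrid_self (k : Fin N) : Function.update (hybrid p q k) k (p k) = hybrid p q k :=
  Function.update_eq_self_iff.2 (by simp [hybrid])

lemma hybrid_apply_eq_or_eq (m : ℕ) (j : Fin N) : hybrid p q m j = p j ∨ hybrid p q m j = q j := by
  unfold hybrid
  split_ifs <;> simp

lemma expVal_sub_eq_sum_hybrid [Fintype A] (f : (Fin N → A) → ℝ) :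
    expVal q f - expVal p f
      = ∑ k : Fin N, expVal (Function.update (hybrid p q k) k (q k - p k)) f := by
  have hstep : ∀ k : Fin N, expVal (Function.update (hybrid p q k) k (q k - p k)) f
      = expVal (hybrid p q (k + 1)) f - expVal (hybrid p q k) f := fun k => by
    conv_rhs => rw [hybrid_succ, ← update_hybrid_self k, Function.update_idem,
      expVal_update, expVal_update, ← sum_sub_distrib]
    rw [expVal_update]
    exact sum_congr rfl fun a _ => by simp only [Pi.sub_apply]; ring
  simp only [hstep]
  rw [Fin.sum_univ_eq_sum_range (fun m => expVal (hybrid p q (m + 1)) f - expVal (hybrid p q m) f),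
    sum_range_sub (fun m => expVal (hybrid p q m) f), hybrid_card, hybrid_zero]

lemma hybrid_pos (hp : ∀ j b, 0 < p j b) (hq : ∀ j b, 0 < q j b) (m : ℕ) (j : Fin N) (b : A) :
    0 < hybrid p q m j b := by
  rcases hybrid_apply_eq_or_eq m j with h | h <;> rw [h]
  exacts [hp j b, hq j b]

lemma sum_hybrid [Fintype A] (hp1 : ∀ j, ∑ b, p j b = 1) (hq1 : ∀ j, ∑ b, q j b = 1) (m : ℕ)
    (j : Fin N) : ∑ b, hybrid p q m j b = 1 := by
  rcases hybrid_apply_eq_or_eq m j with h | h <;> rw [h]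
  exacts [hp1 j, hq1 j]

lemma Jdiv_jointPmf_hybrid_le [Fintype A] (hp : ∀ j b, 0 < p j b) (hp1 : ∀ j, ∑ b, p j b = 1)
    (hq : ∀ j b, 0 < q j b) (hq1 : ∀ j, ∑ b, q j b = 1) (m : ℕ) :
    Jdiv (jointPmf (hybrid p q m)) (jointPmf p) ≤ Jdiv (jointPmf q) (jointPmf p) := by
  rw [Jdiv_jointPmf (hybrid_pos hp hq m) (sum_hybrid hp1 hq1 m) hp hp1,
    Jdiv_jointPmf hq hq1 hp hp1]
  refine sum_le_sum fun j _ => ?_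
  rcases hybrid_apply_eq_or_eq m j with h | h <;> rw [h]
  simpa [Jdiv_eq_sum] using Jdiv_nonneg (hq j) (hp j)

end Hybrid

lemma IsPotential.expVal_update_eq {N : ℕ} {A : Type*} [Fintype A] [DecidableEq A]
    {u : Fin N → (Fin N → A) → ℝ} {Φ : (Fin N → A) → ℝ} (hpot : IsPotential u Φ)
    (w : Fin N → A → ℝ) (k : Fin N) {v : A → ℝ} (hv : ∑ b, v b = 0) :
    expVal (Function.update w k v) Φ = expVal (Function.update w k v) (u k) := by
  have hinv : ∀ a z, (Φ - u k) (Function.update a k z) = (Φ - u k) a := fun a z => by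
    simp only [Pi.sub_apply]
    linarith [hpot k a z]
  rw [← sub_eq_zero, ← expVal_sub]
  exact expVal_update_eq_zero w k hv hinv

section MirrorDescent

variable {A : Type*} [Fintype A]

lemma log_rpow_mul_exp_div_sum {p r : A → ℝ} (hp : ∀ b, 0 < p b) (α η : ℝ) (b : A) :
    Real.log (p b ^ α * Real.exp (η * r b) / ∑ b', p b' ^ α * Real.exp (η * r b'))
      = α * Real.log (p b) + η * r b
        - Real.log (∑ b', p b' ^ α * Real.exp (η * r b')) := by
  have hterm : ∀ b, 0 < p b ^ α * Real.exp (η * r b) := fun b =>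
    mul_pos (Real.rpow_pos_of_pos (hp b) α) (Real.exp_pos _)
  rw [Real.log_div (hterm b).ne' (sum_pos (fun b _ => hterm b) ⟨b, mem_univ b⟩).ne',
    Real.log_mul (Real.rpow_pos_of_pos (hp b) α).ne' (Real.exp_ne_zero _),
    Real.log_rpow (hp b), Real.log_exp]

/-- `hlog` says that `q ∝ p ^ (1 - ητ) * exp (η r)`. -/
lemma sum_sub_mul_add_entropy_sub_eq {p q r : A → ℝ} {η τ c : ℝ} (hη : η ≠ 0)
    (hsum : ∑ b, q b = ∑ b, p b)
    (hlog : ∀ b, Real.log (q b) = (1 - η * τ) * Real.log (p b) + η * r b - c) :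
    ∑ b, (q b - p b) * r b + τ * (entropy q - entropy p) = Jdiv q p / η - τ * KLdiv q p := by
  have hterm : ∀ b, (q b - p b) * r b
      = (q b - p b) * (Real.log (q b) - Real.log (p b)) / η
        + τ * (q b * Real.log (q b) - p b * Real.log (p b))
        - τ * (q b * (Real.log (q b) - Real.log (p b))) + c / η * (q b - p b) := fun b => by
    field_simp
    linear_combination (p b - q b) * hlog b
  simp only [hterm, sum_add_distrib, sum_sub_distrib, ← sum_div,
    ← mul_sum, entropy, KLdiv, Jdiv_eq_sum, hsum]
  ring

end MirrorDescent

lemma NPGstep.pos_and_sum_eq_one {N : ℕ} {A : Type*} [Fintype A] [DecidableEq A]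
    {u : Fin N → (Fin N → A) → ℝ} {τ η : ℝ} {π : ℕ → Fin N → A → ℝ} (hstep : NPGstep u τ η π)
    (hdist : ∀ i, IsDist (π 0 i)) (hpos : ∀ i a, 0 < π 0 i a) (t : ℕ) :
    (∀ i a, 0 < π t i a) ∧ ∀ i, ∑ a, π t i a = 1 := by
  induction t with
  | zero => exact ⟨hpos, fun i => (hdist i).2⟩
  | succ t ih =>
    have hZ : ∀ i, 0 < ∑ a, π t i a ^ (1 - η * τ) * Real.exp (η * margU u (π t) i a) :=
      fun i => sum_pos
        (fun a _ => mul_pos (Real.rpow_pos_of_pos (ih.1 i a) _) (Real.exp_pos _))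
        (nonempty_of_sum_ne_zero (by rw [ih.2 i]; exact one_ne_zero))
    refine ⟨fun i a => ?_, fun i => ?_⟩
    · rw [hstep]
      exact div_pos (mul_pos (Real.rpow_pos_of_pos (ih.1 i a) _) (Real.exp_pos _)) (hZ i)
    · rw [sum_congr rfl fun a _ => hstep t i a, ← sum_div, div_self (hZ i).ne']

section ErrorBounds

variable {N : ℕ} {A : Type*} [Fintype A]

/-- Centering `f` at `1/2` is free because the `k`-th factor `v` has total mass zero. -/
lemma abs_expVal_update_sub_expVal_update_le (w w' : Fin N → A → ℝ) (k : Fin N) {v c : A → ℝ}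
    (hv : ∑ b, v b = 0) (hc : ∀ b, 0 ≤ c b) (hc1 : ∑ b, c b = 1) {f : (Fin N → A) → ℝ}
    (hf : ∀ a, 0 ≤ f a ∧ f a ≤ 1) :
    |expVal (Function.update w k v) f - expVal (Function.update w' k v) f|
      ≤ (∑ b, |v b|)
        * (∑ a, |jointPmf (Function.update w k c) a
          - jointPmf (Function.update w' k c) a|) / 2 := by
  set D : (Fin N → A) → ℝ := fun a =>
    ∏ j ∈ univ.erase k, w j (a j) - ∏ j ∈ univ.erase k, w' j (a j)
  have hD : ∀ a z, D (Function.update a k z) = D a := fun a z => by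
    simp only [D, prod_erase_apply_update]
  have hcenter : ∑ a, v (a k) * (D a / 2) = 0 :=
    sum_apply_mul_eq_zero k hv fun a z => by rw [hD]
  have hfactor := sum_apply_mul_mul_sum_eq k (fun b => |v b|) c (h := fun a => |D a|)
    fun a z => by rw [hD]
  rw [hc1, mul_one] at hfactor
  calc |expVal (Function.update w k v) f - expVal (Function.update w' k v) f|
      = |∑ a, v (a k) * (D a * (f a - 1 / 2))| := by
        rw [expVal_update, expVal_update, ← sum_sub_distrib, ← sub_zero (Finset.sum _ _),
          ← hcenter, ← sum_sub_distrib]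
        exact congrArg _ (sum_congr rfl fun a _ => by ring)
    _ ≤ ∑ a, |v (a k)| * |D a| / 2 := by
        refine (abs_sum_le_sum_abs _ _).trans (sum_le_sum fun a _ => ?_)
        have hf' : |f a - 1 / 2| ≤ 1 / 2 := abs_le.2 ⟨by linarith [hf a], by linarith [hf a]⟩
        rw [abs_mul, abs_mul, mul_div_assoc]
        exact mul_le_mul_of_nonneg_left (by nlinarith [abs_nonneg (D a)]) (abs_nonneg _)
    _ = (∑ b, |v b|)
        * (∑ a, |jointPmf (Function.update w k c) a
          - jointPmf (Function.update w' k c) a|) / 2 := by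
        rw [← sum_div, hfactor]
        congr 2
        refine sum_congr rfl fun a _ => ?_
        rw [jointPmf_update, jointPmf_update, ← mul_sub, abs_mul, abs_of_nonneg (hc _)]

variable {p q : Fin N → A → ℝ}

lemma abs_expVal_update_hybrid_sub_le (hp : ∀ j b, 0 < p j b) (hp1 : ∀ j, ∑ b, p j b = 1)
    (hq : ∀ j b, 0 < q j b) (hq1 : ∀ j, ∑ b, q j b = 1) (k : Fin N) {f : (Fin N → A) → ℝ}
    (hf : ∀ a, 0 ≤ f a ∧ f a ≤ 1) :
    |expVal (Function.update (hybrid p q k) k (q k - p k)) f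
        - expVal (Function.update p k (q k - p k)) f|
      ≤ √(Jdiv (q k) (p k)) * √(Jdiv (jointPmf q) (jointPmf p)) := by
  have hv : ∑ b, (q k - p k) b = 0 := by
    simp only [Pi.sub_apply, sum_sub_distrib, hp1, hq1, sub_self]
  have hagent : ∑ b, |(q k - p k) b| ≤ √(2 * Jdiv (q k) (p k)) :=
    sum_abs_sub_le_sqrt_two_mul_Jdiv (hq k) (hp k) (hq1 k) (hp1 k)
  have hjoint : ∑ a, |jointPmf (hybrid p q k) a - jointPmf p a|
      ≤ √(2 * Jdiv (jointPmf q) (jointPmf p)) :=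
    (sum_abs_sub_le_sqrt_two_mul_Jdiv (jointPmf_pos (hybrid_pos hp hq k)) (jointPmf_pos hp)
      (sum_jointPmf_eq_one (sum_hybrid hp1 hq1 k)) (sum_jointPmf_eq_one hp1)).trans
      (Real.sqrt_le_sqrt (by linarith [Jdiv_jointPmf_hybrid_le hp hp1 hq hq1 k]))
  calc _ ≤ (∑ b, |(q k - p k) b|)
        * (∑ a, |jointPmf (hybrid p q k) a - jointPmf p a|) / 2 := by
        simpa only [update_hybrid_self, Function.update_eq_self] using
          abs_expVal_update_sub_expVal_update_le (hybrid p q k) p k hv (fun b => (hp k b).le)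
            (hp1 k) hf
    _ ≤ √(2 * Jdiv (q k) (p k)) * √(2 * Jdiv (jointPmf q) (jointPmf p)) / 2 := by
        gcongr
    _ = √(Jdiv (q k) (p k)) * √(Jdiv (jointPmf q) (jointPmf p)) := by
        rw [Real.sqrt_mul zero_le_two, Real.sqrt_mul zero_le_two]
        ring_nf
        rw [Real.sq_sqrt zero_le_two]
        ring

end ErrorBounds

section ExpInequalities

lemma exp_sub_one_sub_le_mul (y : ℝ) : Real.exp y - 1 - y ≤ (Real.exp y - 1) * y := by
  have h := mul_le_mul_of_nonneg_right (Real.add_one_le_exp (-y)) (Real.exp_pos y).le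
  rw [← Real.exp_add, neg_add_cancel, Real.exp_zero] at h
  linarith

lemma neg_sum_le_exp_sum_sub_one_sub_sum {ι : Type*} (s : Finset ι) (y : ι → ℝ) :
    -∑ k ∈ s, (Real.exp (y k) - 1) * y k
      ≤ Real.exp (∑ k ∈ s, y k) - 1 - ∑ k ∈ s, (Real.exp (y k) - 1) := by
  have h := sum_le_sum fun k (_ : k ∈ s) => exp_sub_one_sub_le_mul (y k)
  rw [sum_sub_distrib, sum_sub_distrib] at h
  linarith [Real.add_one_le_exp (∑ k ∈ s, y k), sum_sub_distrib (s := s)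
    (f := fun k => Real.exp (y k)) (g := fun _ => (1 : ℝ))]

/-- The exponential inequality above in the variables `y k = log (x' k / x k)`. -/
lemma neg_prod_mul_sum_le_prod_sub_prod_sub_sum {ι : Type*} [Fintype ι] [DecidableEq ι]
    {x x' : ι → ℝ} (hx : ∀ k, 0 < x k) (hx' : ∀ k, 0 < x' k) :
    -((∏ j, x j) * ∑ k, (x' k / x k - 1) * (Real.log (x' k) - Real.log (x k)))
      ≤ ∏ j, x' j - ∏ j, x j - ∑ k, (x' k - x k) * ∏ j ∈ univ.erase k, x j := by
  set y : ι → ℝ := fun k => Real.log (x' k) - Real.log (x k)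
  have hratio : ∀ k, x' k / x k = Real.exp (y k) := fun k => by
    rw [Real.exp_sub, Real.exp_log (hx' k), Real.exp_log (hx k)]
  have hprod : ∏ j, x' j = (∏ j, x j) * Real.exp (∑ k, y k) := by
    rw [Real.exp_sum, ← prod_mul_distrib]
    exact prod_congr rfl fun k _ => by rw [← hratio, mul_div_cancel₀ _ (hx k).ne']
  have hlin : ∀ k, (x' k - x k) * ∏ j ∈ univ.erase k, x j
      = (∏ j, x j) * (Real.exp (y k) - 1) := fun k => by
    rw [← hratio, ← mul_prod_erase _ _ (mem_univ k)]
    field_simp [(hx k).ne']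
  simp only [hratio, hprod, hlin, ← mul_sum]
  have h := mul_le_mul_of_nonneg_left (neg_sum_le_exp_sum_sub_one_sub_sum univ y)
    (prod_pos fun j (_ : j ∈ univ) => hx j).le
  simp only [y] at h ⊢
  linarith

end ExpInequalities

section PotentialGap

variable {N : ℕ} {A : Type*} [Fintype A] {p q : Fin N → A → ℝ}

lemma neg_sqrt_mul_Jdiv_le_sum_hybrid_sub (hp : ∀ j b, 0 < p j b) (hp1 : ∀ j, ∑ b, p j b = 1)
    (hq : ∀ j b, 0 < q j b) (hq1 : ∀ j, ∑ b, q j b = 1) {f : Fin N → (Fin N → A) → ℝ}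
    (hf : ∀ k a, 0 ≤ f k a ∧ f k a ≤ 1) :
    -(√N * Jdiv (jointPmf q) (jointPmf p))
      ≤ ∑ k : Fin N, (expVal (Function.update (hybrid p q k) k (q k - p k)) (f k)
        - expVal (Function.update p k (q k - p k)) (f k)) := by
  set J := Jdiv (jointPmf q) (jointPmf p)
  have hJ : 0 ≤ J := Jdiv_nonneg (jointPmf_pos hq) (jointPmf_pos hp)
  have hCS : ∑ k, √(Jdiv (q k) (p k)) ≤ √N * √J := by
    simpa [J, Jdiv_jointPmf hq hq1 hp hp1] using
      Real.sum_sqrt_mul_sqrt_le univ (f := fun _ : Fin N => (1 : ℝ))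
        (g := fun k => Jdiv (q k) (p k)) (fun _ => zero_le_one) fun k => Jdiv_nonneg (hq k) (hp k)
  calc -(√N * J) = -(√N * √J * √J) := by rw [mul_assoc, Real.mul_self_sqrt hJ]
    _ ≤ -∑ k, √(Jdiv (q k) (p k)) * √J := by
        rw [← sum_mul]
        gcongr
    _ ≤ -∑ k : Fin N, |expVal (Function.update (hybrid p q k) k (q k - p k)) (f k)
          - expVal (Function.update p k (q k - p k)) (f k)| :=
        neg_le_neg (sum_le_sum fun k _ =>
          abs_expVal_update_hybrid_sub_le hp hp1 hq hq1 k (hf k))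
    _ ≤ _ := by
        rw [← sum_neg_distrib]
        exact sum_le_sum fun k _ => neg_abs_le _

lemma neg_mul_Jdiv_le_expVal_sub_sub_sum (hp : ∀ j b, 0 < p j b) (hp1 : ∀ j, ∑ b, p j b = 1)
    (hq : ∀ j b, 0 < q j b) (hq1 : ∀ j, ∑ b, q j b = 1) {Φ : (Fin N → A) → ℝ} {M : ℝ}
    (hΦ : ∀ a, 0 ≤ Φ a ∧ Φ a ≤ M) :
    -(M * Jdiv (jointPmf q) (jointPmf p))
      ≤ expVal q Φ - expVal p Φ - ∑ k, expVal (Function.update p k (q k - p k)) Φ := by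
  set ℓ : Fin N → A → ℝ := fun k b => (q k b / p k b - 1) * (Real.log (q k b) - Real.log (p k b))
  have hℓ : ∀ k b, 0 ≤ ℓ k b := fun k b => by
    have h := sub_mul_log_sub_log_nonneg (hq k b) (hp k b)
    have hp' := hp k b
    simp only [ℓ, div_sub_one hp'.ne', div_mul_eq_mul_div]
    positivity
  have hJ : Jdiv (jointPmf q) (jointPmf p) = ∑ a, jointPmf p a * ∑ k, ℓ k (a k) := by
    simp only [Jdiv_jointPmf hq hq1 hp hp1, mul_sum]
    rw [sum_comm]
    refine sum_congr rfl fun k _ => ?_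
    rw [← expVal, expVal_apply hp1, Jdiv_eq_sum]
    refine sum_congr rfl fun b _ => ?_
    simp only [ℓ]
    field_simp [(hp k b).ne']
  have hgap : expVal q Φ - expVal p Φ - ∑ k, expVal (Function.update p k (q k - p k)) Φ
      = ∑ a, (jointPmf q a - jointPmf p a
          - ∑ k, (q k (a k) - p k (a k)) * ∏ j ∈ univ.erase k, p j (a j)) * Φ a := by
    simp only [expVal_update]
    simp only [expVal, Pi.sub_apply]
    rw [sum_comm, ← sum_sub_distrib, ← sum_sub_distrib]
    refine sum_congr rfl fun a _ => ?_
    simp only [sub_mul, sum_mul, mul_assoc]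
  rw [hJ, hgap, mul_sum, ← sum_neg_distrib]
  refine sum_le_sum fun a _ => ?_
  have hpt : -(jointPmf p a * ∑ k, ℓ k (a k)) ≤ jointPmf q a - jointPmf p a
      - ∑ k, (q k (a k) - p k (a k)) * ∏ j ∈ univ.erase k, p j (a j) :=
    neg_prod_mul_sum_le_prod_sub_prod_sub_sum (fun k => hp k (a k)) fun k => hq k (a k)
  have hPT : 0 ≤ jointPmf p a * ∑ k, ℓ k (a k) :=
    mul_nonneg (jointPmf_pos hp a).le (sum_nonneg fun k _ => hℓ k (a k))
  obtain ⟨hΦ0, hΦM⟩ := hΦ a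
  rcases le_total 0 (jointPmf q a - jointPmf p a
      - ∑ k, (q k (a k) - p k (a k)) * ∏ j ∈ univ.erase k, p j (a j)) with hΨ | hΨ
  · nlinarith [mul_nonneg hΨ hΦ0, mul_nonneg hPT (hΦ0.trans hΦM)]
  · nlinarith [mul_nonneg (neg_nonneg.2 hΨ) (sub_nonneg.2 hΦM), mul_nonneg hPT (hΦ0.trans hΦM)]

end PotentialGap

lemma IsPotential.neg_min_mul_Jdiv_le {N : ℕ} {A : Type*} [Fintype A] [DecidableEq A]
    {u : Fin N → (Fin N → A) → ℝ} {Φ : (Fin N → A) → ℝ} {Φmax : ℝ} (hpot : IsPotential u Φ)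
    (hu : ∀ i a, 0 ≤ u i a ∧ u i a ≤ 1) (hΦ : ∀ a, 0 ≤ Φ a ∧ Φ a ≤ Φmax)
    {p q : Fin N → A → ℝ} (hp : ∀ j b, 0 < p j b) (hp1 : ∀ j, ∑ b, p j b = 1)
    (hq : ∀ j b, 0 < q j b) (hq1 : ∀ j, ∑ b, q j b = 1) :
    -(min √N (2 * Φmax) * Jdiv (jointPmf q) (jointPmf p))
      ≤ expVal q Φ - expVal p Φ - ∑ k, ∑ b, (q k b - p k b) * margU u p k b := by
  have hv : ∀ k, ∑ b, (q k - p k) b = 0 := fun k => by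
    simp only [Pi.sub_apply, sum_sub_distrib, hp1, hq1, sub_self]
  have hlin : ∀ k, ∑ b, (q k b - p k b) * margU u p k b
      = expVal (Function.update p k (q k - p k)) (u k) := fun k => by
    rw [expVal_update_eq_sum]
    rfl
  have hJ := Jdiv_nonneg (jointPmf_pos hq) (jointPmf_pos hp)
  rcases min_cases √N (2 * Φmax) with ⟨hmin, -⟩ | ⟨hmin, -⟩ <;> rw [hmin]
  · rw [expVal_sub_eq_sum_hybrid, ← sum_sub_distrib]
    simp only [hpot.expVal_update_eq _ _ (hv _), hlin]
    exact neg_sqrt_mul_Jdiv_le_sum_hybrid_sub hp hp1 hq hq1 fun k => hu k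
  · obtain ⟨a, -⟩ := nonempty_of_sum_ne_zero (s := univ) (f := jointPmf p)
      (by rw [sum_jointPmf_eq_one hp1]; exact one_ne_zero)
    have hΦmax : 0 ≤ Φmax := (hΦ a).1.trans (hΦ a).2
    simp only [hlin, ← hpot.expVal_update_eq p _ (hv _)]
    nlinarith [neg_mul_Jdiv_le_expVal_sub_sub_sum hp hp1 hq hq1 hΦ, mul_nonneg hΦmax hJ]

theorem potential_improvement_min_general
    {N : ℕ} {A : Type*} [Fintype A] [DecidableEq A]
    (u : Fin N → (Fin N → A) → ℝ) (hu : ∀ i a, 0 ≤ u i a ∧ u i a ≤ 1)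
    (Φ : (Fin N → A) → ℝ) (Φmax : ℝ) (hΦ : ∀ a, 0 ≤ Φ a ∧ Φ a ≤ Φmax)
    (hpot : IsPotential u Φ)
    (τ η : ℝ) (hτ : 0 < τ) (hη : 0 < η)
    (π : ℕ → Fin N → A → ℝ)
    (hdist : ∀ i, IsDist (π 0 i)) (hpos : ∀ i a, 0 < π 0 i a)
    (hstep : NPGstep u τ η π) :
    ∀ t : ℕ,
      regPot Φ τ (π (t + 1)) - regPot Φ τ (π t) ≥
        (1 / η - min (Real.sqrt N) (2 * Φmax) - τ) * Jdiv (jointPmf (π (t + 1))) (jointPmf (π t)) := by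
  intro t
  obtain ⟨hp, hp1⟩ := hstep.pos_and_sum_eq_one hdist hpos t
  obtain ⟨hq, hq1⟩ := hstep.pos_and_sum_eq_one hdist hpos (t + 1)
  have hagent : ∀ k, ∑ b, (π (t + 1) k b - π t k b) * margU u (π t) k b
      + τ * (entropy (π (t + 1) k) - entropy (π t k))
      = Jdiv (π (t + 1) k) (π t k) / η - τ * KLdiv (π (t + 1) k) (π t k) := fun k =>
    sum_sub_mul_add_entropy_sub_eq hη.ne' (by rw [hp1, hq1])
      fun b => by rw [hstep t k b, log_rpow_mul_exp_div_sum (hp k)]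
  have hKL : ∑ k, KLdiv (π (t + 1) k) (π t k) ≤ Jdiv (jointPmf (π (t + 1))) (jointPmf (π t)) := by
    rw [Jdiv_jointPmf hq hq1 hp hp1]
    exact sum_le_sum fun k _ => KLdiv_le_Jdiv (hq k) (hp k) (by rw [hp1, hq1])
  have hgap := hpot.neg_min_mul_Jdiv_le hu hΦ hp hp1 hq hq1
  have hregPot : regPot Φ τ (π (t + 1)) - regPot Φ τ (π t)
      = expVal (π (t + 1)) Φ - expVal (π t) Φ
          - ∑ k, ∑ b, (π (t + 1) k b - π t k b) * margU u (π t) k b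
        + (Jdiv (jointPmf (π (t + 1))) (jointPmf (π t)) / η
          - τ * ∑ k, KLdiv (π (t + 1) k) (π t k)) := by
    rw [Jdiv_jointPmf hq hq1 hp hp1, sum_div, mul_sum, ← sum_sub_distrib,
      ← sum_congr rfl fun k _ => hagent k]
    simp only [regPot, sum_add_distrib, ← mul_sum, sum_sub_distrib]
    ring
  rw [ge_iff_le, hregPot, sub_mul, sub_mul, one_div_mul_eq_div]
  linarith [mul_le_mul_of_nonneg_left hKL hτ.le]

/-- Performance improvement of the regularized potential under independent NPG. -/
theorem potential_improvement_min
    {N : ℕ} (hN : 0 < N) {A : Type*} [Fintype A] [DecidableEq A] [Nonempty A]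
    (u : Fin N → (Fin N → A) → ℝ) (hu : ∀ i a, 0 ≤ u i a ∧ u i a ≤ 1)
    (Φ : (Fin N → A) → ℝ) (Φmax : ℝ) (hΦ : ∀ a, 0 ≤ Φ a ∧ Φ a ≤ Φmax)
    (hpot : IsPotential u Φ)
    (τ η : ℝ) (hτ : 0 < τ) (hη : 0 < η)
    (π : ℕ → Fin N → A → ℝ)
    (hdist : ∀ i, IsDist (π 0 i)) (hpos : ∀ i a, 0 < π 0 i a)
    (hstep : NPGstep u τ η π) :
    ∀ t : ℕ,
      regPot Φ τ (π (t + 1)) - regPot Φ τ (π t) ≥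
        (1 / η - min (Real.sqrt N) (2 * Φmax) - τ) * Jdiv (jointPmf (π (t + 1))) (jointPmf (π t)) :=
  potential_improvement_min_general u hu Φ Φmax hΦ hpot τ η hτ hη π hdist hpos hstep
end
end

section
/- For every agent i and every t ≥ 0, the independent entropy-regularized NPG update satisfies the identity ⟨r_i^(t), π_i^(t+1) − π_i^(t)⟩ + τ (H(π_i^(t+1)) − H(π_i^(t))) = (1/η − τ) · KL(π_i^(t+1) ‖ π_i^(t)) + (1/η) · KL(π_i^(t) ‖ π_i^(t+1)), where ⟨f, μ⟩ = Σ_{a∈𝒜} f(a) μ(a). -/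
open Finset

noncomputable section

/-- Exact one-step identity for the independent entropy-regularized NPG update. -/
theorem npg_step_identity
    {N : ℕ} (hN : 0 < N) {A : Type*} [Fintype A] [DecidableEq A] [Nonempty A]
    (u : Fin N → (Fin N → A) → ℝ) (hu : ∀ i a, 0 ≤ u i a ∧ u i a ≤ 1)
    (τ η : ℝ) (hτ : 0 < τ) (hη : 0 < η)
    (π : ℕ → Fin N → A → ℝ)
    (hdist : ∀ i, IsDist (π 0 i)) (hpos : ∀ i a, 0 < π 0 i a)
    (hstep : NPGstep u τ η π) :
    ∀ (i : Fin N) (t : ℕ),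
      (∑ a, margU u (π t) i a * (π (t + 1) i a - π t i a)) +
          τ * (entropy (π (t + 1) i) - entropy (π t i)) =
        (1 / η - τ) * KLdiv (π (t + 1) i) (π t i) +
          (1 / η) * KLdiv (π t i) (π (t + 1) i) := by
  -- Positivity of all iterates
  have hposAll : ∀ t i a, 0 < π t i a := by
    intro t
    induction t with
    | zero => exact hpos
    | succ t ih =>
      intro i a
      rw [hstep t i a]
      exact div_pos (mul_pos (Real.rpow_pos_of_pos (ih i a) _) (Real.exp_pos _))
        (Finset.sum_pos (fun a' _ => mul_pos (Real.rpow_pos_of_pos (ih i a') _)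
          (Real.exp_pos _)) Finset.univ_nonempty)
  -- All iterates sum to one
  have hsumAll : ∀ t i, ∑ a, π t i a = 1 := by
    intro t i
    cases t with
    | zero => exact (hdist i).2
    | succ t =>
      have hZ : 0 < ∑ a', π t i a' ^ (1 - η * τ) * Real.exp (η * margU u (π t) i a') :=
        Finset.sum_pos (fun a' _ => mul_pos (Real.rpow_pos_of_pos (hposAll t i a') _)
          (Real.exp_pos _)) Finset.univ_nonempty
      have : ∀ a ∈ Finset.univ, π (t+1) i a =
          π t i a ^ (1 - η * τ) * Real.exp (η * margU u (π t) i a) /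
            ∑ a', π t i a' ^ (1 - η * τ) * Real.exp (η * margU u (π t) i a') :=
        fun a _ => hstep t i a
      rw [Finset.sum_congr rfl this, ← Finset.sum_div, div_self (ne_of_gt hZ)]
  intro i t
  set p : A → ℝ := π t i with hp
  set p' : A → ℝ := π (t+1) i with hp'
  set r : A → ℝ := fun a => margU u (π t) i a with hr
  set Z : ℝ := ∑ a', π t i a' ^ (1 - η * τ) * Real.exp (η * margU u (π t) i a') with hZdef
  have hZ : 0 < Z :=
    Finset.sum_pos (fun a' _ => mul_pos (Real.rpow_pos_of_pos (hposAll t i a') _)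
      (Real.exp_pos _)) Finset.univ_nonempty
  have key : ∀ a, η * r a = Real.log (p' a) - (1 - η * τ) * Real.log (p a) + Real.log Z := by
    intro a
    have hpa : 0 < p a := hposAll t i a
    have h1 : p' a = p a ^ (1 - η * τ) * Real.exp (η * r a) / Z := hstep t i a
    rw [h1, Real.log_div (by positivity) (ne_of_gt hZ), Real.log_mul (by positivity)
      (Real.exp_ne_zero _), Real.log_rpow hpa, Real.log_exp]
    ring
  -- pointwise identity
  have hpt : ∀ a ∈ Finset.univ, η * (r a * (p' a - p a))
        + η * τ * (p a * Real.log (p a) - p' a * Real.log (p' a))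
        - (1 - η * τ) * (p' a * (Real.log (p' a) - Real.log (p a)))
        - p a * (Real.log (p a) - Real.log (p' a))
      = Real.log Z * (p' a - p a) := by
    intro a _
    linear_combination (p' a - p a) * key a
  have hsumeq : ∑ a, (η * (r a * (p' a - p a))
        + η * τ * (p a * Real.log (p a) - p' a * Real.log (p' a))
        - (1 - η * τ) * (p' a * (Real.log (p' a) - Real.log (p a)))
        - p a * (Real.log (p a) - Real.log (p' a))) = 0 := by
    rw [Finset.sum_congr rfl hpt, ← Finset.mul_sum, Finset.sum_sub_distrib]
    have h1 : ∑ a, p' a = 1 := hsumAll (t+1) i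
    have h2 : ∑ a, p a = 1 := hsumAll t i
    rw [h1, h2]
    ring
  simp only [Finset.sum_sub_distrib, Finset.sum_add_distrib, ← Finset.mul_sum] at hsumeq
  simp only [entropy, KLdiv]
  have hη' : η ≠ 0 := ne_of_gt hη
  field_simp
  linear_combination hsumeq
end
end

section
/- Let π and π' be two product policies (each π_i, π_i' a distribution on 𝒜), and for each agent i define the interleaved marginalized utility r̃_i(a) = Σ_{a_{-i}∈𝒜^{N−1}} u_i(a, a_{-i}) · ∏_{j<i} π_j(a_j) · ∏_{k>i} π_k'(a_k). Then Σ_{i=1}^N |⟨r̃_i − r_i^π, π_i' − π_i⟩| ≤ √N · J(π', π), where ⟨f, μ⟩ = Σ_{a∈𝒜} f(a) μ(a). -/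
open Finset

noncomputable section

/-!
For fixed `i` and `a`, the interleaved policy `σ` and the policy `ρ` obtained from `π` by replacing
`π i` with the point mass at `a` differ only in the coordinates `j > i`. Writing both joint laws as
a common weight times the products over `j > i`, Cauchy–Schwarz and the pointwise inequality
`(p - q)² ≤ (p + q) (p - q) (log p - log q)` give the Pinsker-type bound
`‖σ - ρ‖₁² ≤ 2 ∑_{j > i} J(π' j, π j) ≤ 2 J`, since `J` is additive over product distributions.
As `u i` takes values in `[0, 1]`, the two expected utilities then differ by at most `√(J / 2)`.
The same inequality gives `‖π' i - π i‖₁ ≤ √(2 J(π' i, π i))`, and Cauchy–Schwarz over the agents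
bounds the total by `√(J / 2) · √(2 N J) = √N J`.
-/

section

open Real

theorem sq_sub_le_add_mul_sub_mul_log_sub {p q : ℝ} (hp : 0 < p) (hq : 0 < q) :
    (p - q) ^ 2 ≤ (p + q) * ((p - q) * (log p - log q)) := by
  have hlower : p - q ≤ p * (log p - log q) := by
    have h := one_sub_inv_le_log_of_pos (div_pos hp hq)
    rw [log_div hp.ne' hq.ne', inv_div] at h
    calc p - q = p * (1 - q / p) := by field_simp
      _ ≤ p * (log p - log q) := by gcongr
  have hupper : q * (log p - log q) ≤ p - q := by
    have h := log_le_sub_one_of_pos (div_pos hp hq)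
    rw [log_div hp.ne' hq.ne'] at h
    calc q * (log p - log q) ≤ q * (p / q - 1) := by gcongr
      _ = p - q := by field_simp
  -- `(p + q) d L - d² = (p L - d)(d - q L) + p q L²` with `d = p - q`, `L = log p - log q`
  nlinarith [mul_nonneg (sub_nonneg.2 hlower) (sub_nonneg.2 hupper),
    mul_nonneg (mul_pos hp hq).le (sq_nonneg (log p - log q))]

theorem sub_mul_log_sub_nonneg {p q : ℝ} (hp : 0 < p) (hq : 0 < q) :
    0 ≤ (p - q) * (log p - log q) := by
  rcases le_total p q with h | h
  · exact mul_nonneg_of_nonpos_of_nonpos (sub_nonpos.2 h) (sub_nonpos.2 (log_le_log hp h))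
  · exact mul_nonneg (sub_nonneg.2 h) (sub_nonneg.2 (log_le_log hq h))

theorem Jdiv_eq_sum_s15 {B : Type*} [Fintype B] (p q : B → ℝ) :
    Jdiv p q = ∑ b, (p b - q b) * (log (p b) - log (q b)) := by
  rw [Jdiv, KLdiv, KLdiv, ← sum_add_distrib]
  exact sum_congr rfl fun b _ => by ring

theorem Jdiv_nonneg_s15 {B : Type*} [Fintype B] {p q : B → ℝ} (hp : ∀ b, 0 < p b)
    (hq : ∀ b, 0 < q b) : 0 ≤ Jdiv p q := by
  rw [Jdiv_eq_sum_s15]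
  exact sum_nonneg fun b _ => sub_mul_log_sub_nonneg (hp b) (hq b)

theorem sq_sum_mul_abs_sub_le {B : Type*} [Fintype B] {w t t' : B → ℝ}
    (hw : ∀ b, 0 ≤ w b) (ht : ∀ b, 0 < t b) (ht' : ∀ b, 0 < t' b)
    (h1 : ∑ b, w b * t b = 1) (h1' : ∑ b, w b * t' b = 1) :
    (∑ b, w b * |t' b - t b|) ^ 2 ≤
      2 * ∑ b, w b * ((t' b - t b) * (log (t' b) - log (t b))) := by
  have hmass : ∑ b, w b * (t' b + t b) = 2 := by
    simp only [mul_add, sum_add_distrib, h1, h1']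
    norm_num
  calc (∑ b, w b * |t' b - t b|) ^ 2
      ≤ (∑ b, w b * ((t' b - t b) * (log (t' b) - log (t b)))) *
          ∑ b, w b * (t' b + t b) := by
        refine sum_sq_le_sum_mul_sum_of_sq_le_mul _
          (fun b _ => mul_nonneg (hw b) (sub_mul_log_sub_nonneg (ht' b) (ht b)))
          (fun b _ => mul_nonneg (hw b) (ht' b |>.le.trans (le_add_of_nonneg_right (ht b).le)))
          fun b _ => ?_
        have := mul_le_mul_of_nonneg_left (sq_sub_le_add_mul_sub_mul_log_sub (ht' b) (ht b))
          (sq_nonneg (w b))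
        rw [mul_pow, sq_abs]
        linarith
    _ = 2 * ∑ b, w b * ((t' b - t b) * (log (t' b) - log (t b))) := by rw [hmass, mul_comm]

theorem sum_abs_sub_le_sqrt_two_mul_Jdiv_s15 {B : Type*} [Fintype B] {p q : B → ℝ}
    (hp : ∀ b, 0 < p b) (hq : ∀ b, 0 < q b) (hp1 : ∑ b, p b = 1) (hq1 : ∑ b, q b = 1) :
    ∑ b, |p b - q b| ≤ √(2 * Jdiv p q) := by
  have := sq_sum_mul_abs_sub_le (w := 1) (fun _ => zero_le_one) hq hp (by simpa) (by simpa)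
  simp only [Pi.one_apply, one_mul] at this
  exact le_sqrt_of_sq_le (by rwa [Jdiv_eq_sum_s15])

theorem abs_sum_sub_mul_le_half_sum_abs {B : Type*} [Fintype B] {P Q f : B → ℝ}
    (hPQ : ∑ b, P b = ∑ b, Q b) (hf : ∀ b, 0 ≤ f b ∧ f b ≤ 1) :
    |∑ b, (P b - Q b) * f b| ≤ (∑ b, |P b - Q b|) / 2 := by
  have hcenter : ∑ b, (P b - Q b) * f b = ∑ b, (P b - Q b) * (f b - 1 / 2) := by
    simp only [mul_sub, sum_sub_distrib, ← sum_mul, hPQ, sub_self, zero_mul, sub_zero]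
  rw [hcenter, sum_div]
  refine (abs_sum_le_sum_abs _ _).trans (sum_le_sum fun b _ => ?_)
  have hdev : |f b - 1 / 2| ≤ 1 / 2 := abs_le.2 ⟨by linarith [hf b], by linarith [hf b]⟩
  rw [abs_mul]
  linarith [mul_le_mul_of_nonneg_left hdev (abs_nonneg (P b - Q b))]

theorem log_prod_sub_log_prod {ι α : Type*} {σ ρ : ι → α → ℝ} (S : Finset ι)
    (hσ : ∀ j ∈ S, ∀ a, 0 < σ j a) (hρ : ∀ j ∈ S, ∀ a, 0 < ρ j a) (b : ι → α) :
    log (∏ j ∈ S, σ j (b j)) - log (∏ j ∈ S, ρ j (b j)) =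
      ∑ j ∈ S, (log (σ j (b j)) - log (ρ j (b j))) := by
  rw [log_prod fun j hj => (hσ j hj (b j)).ne', log_prod fun j hj => (hρ j hj (b j)).ne',
    sum_sub_distrib]

section ProductPolicy

variable {N : ℕ} {A : Type*} [Fintype A]

theorem sum_jointPmf_eq_one_s15 {σ : Fin N → A → ℝ} (hσ : ∀ k, ∑ x, σ k x = 1) :
    ∑ b, jointPmf σ b = 1 := by
  rw [← Fintype.piFinset_univ]
  simp only [jointPmf, ← prod_univ_sum, hσ, prod_const_one]

theorem sum_jointPmf_mul_apply {σ : Fin N → A → ℝ} {j : Fin N}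
    (hσ : ∀ k ≠ j, ∑ x, σ k x = 1) (ℓ : A → ℝ) :
    ∑ b, jointPmf σ b * ℓ (b j) = ∑ x, σ j x * ℓ x := by
  have hfactor : ∀ b : Fin N → A,
      jointPmf σ b * ℓ (b j) = ∏ k, σ k (b k) * (if k = j then ℓ (b k) else 1) := by
    intro b
    rw [prod_mul_distrib, Fintype.prod_ite_eq']
    rfl
  simp only [hfactor]
  rw [← Fintype.piFinset_univ,
    ← prod_univ_sum (fun _ => univ) fun k x => σ k x * if k = j then ℓ x else 1,
    Fintype.prod_eq_single j fun k hk => ?_]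
  · simp
  · simp [hk, hσ k hk]

theorem sum_jointPmf_sub_mul_sum {σ ρ : Fin N → A → ℝ} (hσ : ∀ k, ∑ x, σ k x = 1)
    (hρ : ∀ k, ∑ x, ρ k x = 1) (S : Finset (Fin N)) (g : Fin N → A → ℝ) :
    ∑ b, (jointPmf σ b - jointPmf ρ b) * ∑ j ∈ S, g j (b j) =
      ∑ j ∈ S, ∑ x, (σ j x - ρ j x) * g j x := by
  simp only [mul_sum]
  rw [sum_comm]
  refine sum_congr rfl fun j _ => ?_
  simp only [sub_mul, sum_sub_distrib, sum_jointPmf_mul_apply (fun k _ => hσ k),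
    sum_jointPmf_mul_apply (fun k _ => hρ k)]

theorem Jdiv_jointPmf_s15 {p q : Fin N → A → ℝ} (hp : ∀ j, IsDist (p j)) (hq : ∀ j, IsDist (q j))
    (hp₀ : ∀ j a, 0 < p j a) (hq₀ : ∀ j a, 0 < q j a) :
    Jdiv (jointPmf p) (jointPmf q) = ∑ j, Jdiv (p j) (q j) := by
  simp only [Jdiv_eq_sum_s15]
  refine (sum_congr rfl fun b _ => ?_).trans (sum_jointPmf_sub_mul_sum (fun j => (hp j).2)
    (fun j => (hq j).2) univ fun j x => log (p j x) - log (q j x))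
  exact congrArg (_ * ·) (log_prod_sub_log_prod univ (fun j _ => hp₀ j) (fun j _ => hq₀ j) b)

theorem sq_sum_abs_jointPmf_sub_le {σ ρ : Fin N → A → ℝ} {S : Finset (Fin N)}
    (hσ : ∀ j, IsDist (σ j)) (hρ : ∀ j, IsDist (ρ j)) (hagree : ∀ j ∉ S, σ j = ρ j)
    (hσS : ∀ j ∈ S, ∀ a, 0 < σ j a) (hρS : ∀ j ∈ S, ∀ a, 0 < ρ j a) :
    (∑ b, |jointPmf σ b - jointPmf ρ b|) ^ 2 ≤ 2 * ∑ j ∈ S, Jdiv (σ j) (ρ j) := by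
  set w : (Fin N → A) → ℝ := fun b => ∏ j ∈ Sᶜ, ρ j (b j)
  set t : (Fin N → A) → ℝ := fun b => ∏ j ∈ S, ρ j (b j)
  set t' : (Fin N → A) → ℝ := fun b => ∏ j ∈ S, σ j (b j)
  have hρw : ∀ b, jointPmf ρ b = w b * t b := fun b => by
    rw [jointPmf, ← prod_mul_prod_compl S, mul_comm]
  have hσw : ∀ b, jointPmf σ b = w b * t' b := fun b => by
    rw [jointPmf, ← prod_mul_prod_compl S, mul_comm]
    exact congrArg (· * t' b) (prod_congr rfl fun j hj => by rw [hagree j (mem_compl.1 hj)])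
  have hw : ∀ b, 0 ≤ w b := fun b => prod_nonneg fun j _ => (hρ j).1 (b j)
  have hmass : ∀ {τ : Fin N → A → ℝ}, (∀ j, IsDist (τ j)) → ∑ b, jointPmf τ b = 1 :=
    fun hτ => sum_jointPmf_eq_one_s15 fun j => (hτ j).2
  have hJ : ∑ b, w b * ((t' b - t b) * (log (t' b) - log (t b))) =
      ∑ j ∈ S, Jdiv (σ j) (ρ j) := by
    simp only [Jdiv_eq_sum_s15, t, t', log_prod_sub_log_prod S hσS hρS]
    rw [← sum_jointPmf_sub_mul_sum (fun j => (hσ j).2) (fun j => (hρ j).2)]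
    exact sum_congr rfl fun b _ => by rw [hσw, hρw]; ring
  calc (∑ b, |jointPmf σ b - jointPmf ρ b|) ^ 2 = (∑ b, w b * |t' b - t b|) ^ 2 := by
        simp only [hσw, hρw, ← mul_sub, abs_mul, abs_of_nonneg (hw _)]
    _ ≤ 2 * ∑ b, w b * ((t' b - t b) * (log (t' b) - log (t b))) :=
        sq_sum_mul_abs_sub_le hw (fun b => prod_pos fun j hj => hρS j hj (b j))
          (fun b => prod_pos fun j hj => hσS j hj (b j))
          (by simpa only [hρw] using hmass hρ) (by simpa only [hσw] using hmass hσ)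
    _ = 2 * ∑ j ∈ S, Jdiv (σ j) (ρ j) := by rw [hJ]

theorem abs_expVal_sub_le_sqrt_sum_Jdiv {σ ρ : Fin N → A → ℝ} {S : Finset (Fin N)}
    (hσ : ∀ j, IsDist (σ j)) (hρ : ∀ j, IsDist (ρ j)) (hagree : ∀ j ∉ S, σ j = ρ j)
    (hσS : ∀ j ∈ S, ∀ a, 0 < σ j a) (hρS : ∀ j ∈ S, ∀ a, 0 < ρ j a)
    {f : (Fin N → A) → ℝ} (hf : ∀ b, 0 ≤ f b ∧ f b ≤ 1) :
    |expVal σ f - expVal ρ f| ≤ √((∑ j ∈ S, Jdiv (σ j) (ρ j)) / 2) := by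
  have hexp : expVal σ f - expVal ρ f = ∑ b, (jointPmf σ b - jointPmf ρ b) * f b := by
    simp only [expVal, ← sum_sub_distrib, sub_mul]
  have hhalf := abs_sum_sub_mul_le_half_sum_abs (P := jointPmf σ) (Q := jointPmf ρ)
    (by rw [sum_jointPmf_eq_one_s15 fun j => (hσ j).2, sum_jointPmf_eq_one_s15 fun j => (hρ j).2]) hf
  rw [hexp]
  refine le_sqrt_of_sq_le ?_
  calc |∑ b, (jointPmf σ b - jointPmf ρ b) * f b| ^ 2
      ≤ ((∑ b, |jointPmf σ b - jointPmf ρ b|) / 2) ^ 2 := pow_le_pow_left₀ (abs_nonneg _) hhalf 2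
    _ = (∑ b, |jointPmf σ b - jointPmf ρ b|) ^ 2 / 4 := by ring
    _ ≤ 2 * (∑ j ∈ S, Jdiv (σ j) (ρ j)) / 4 := by
        gcongr
        exact sq_sum_abs_jointPmf_sub_le hσ hρ hagree hσS hρS
    _ = (∑ j ∈ S, Jdiv (σ j) (ρ j)) / 2 := by ring

end ProductPolicy

end

theorem isDist_pmfOf {A : Type*} [Fintype A] [DecidableEq A] (a : A) : IsDist (pmfOf a) :=
  ⟨fun b => by unfold pmfOf; split <;> norm_num, by simp [pmfOf]⟩

theorem abs_sum_mul_le_mul_sum_abs {B : Type*} [Fintype B] {f g : B → ℝ} {c : ℝ}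
    (hf : ∀ b, |f b| ≤ c) : |∑ b, f b * g b| ≤ c * ∑ b, |g b| := by
  rw [mul_sum]
  refine (abs_sum_le_sum_abs _ _).trans (sum_le_sum fun b _ => ?_)
  rw [abs_mul]
  exact mul_le_mul_of_nonneg_right (hf b) (abs_nonneg _)

theorem sum_sqrt_le_sqrt_card_mul_sum {ι : Type*} [Fintype ι] {x : ι → ℝ}
    (hx : ∀ i, 0 ≤ x i) : ∑ i, √(x i) ≤ √(Fintype.card ι * ∑ i, x i) := by
  rw [Real.sqrt_mul (Nat.cast_nonneg _), mul_comm]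
  simpa using Real.sum_sqrt_mul_sqrt_le univ hx fun _ => zero_le_one

theorem abs_expVal_interleaved_sub_margU_le {N : ℕ} {A : Type*} [Fintype A] [DecidableEq A]
    (u : Fin N → (Fin N → A) → ℝ) (hu : ∀ i a, 0 ≤ u i a ∧ u i a ≤ 1)
    {π π' : Fin N → A → ℝ} (hdist : ∀ i, IsDist (π i)) (hdist' : ∀ i, IsDist (π' i))
    (hpos : ∀ i a, 0 < π i a) (hpos' : ∀ i a, 0 < π' i a) (i : Fin N) (a : A) :
    |expVal (fun j => if j = i then pmfOf a else if j < i then π j else π' j) (u i) -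
        margU u π i a| ≤ √((∑ j ∈ Ioi i, Jdiv (π' j) (π j)) / 2) := by
  set σ : Fin N → A → ℝ := fun j => if j = i then pmfOf a else if j < i then π j else π' j
  have hσ_of_lt : ∀ j ∈ Ioi i, σ j = π' j := fun j hj => by
    have hij : i < j := mem_Ioi.1 hj
    simp [σ, hij.ne', hij.not_gt]
  have hρ_of_lt : ∀ j ∈ Ioi i, Function.update π i (pmfOf a) j = π j := fun j hj =>
    Function.update_of_ne (mem_Ioi.1 hj).ne' _ _
  have hσ : ∀ j, IsDist (σ j) := fun j => by
    simp only [σ]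
    split_ifs
    exacts [isDist_pmfOf a, hdist j, hdist' j]
  have hρ : ∀ j, IsDist (Function.update π i (pmfOf a) j) := fun j => by
    rcases eq_or_ne j i with rfl | hj
    · simpa using isDist_pmfOf a
    · simpa [hj] using hdist j
  have hagree : ∀ j ∉ Ioi i, σ j = Function.update π i (pmfOf a) j := fun j hj => by
    rcases (not_lt.1 (mt mem_Ioi.2 hj)).lt_or_eq with hji | rfl
    · simp [σ, hji.ne, hji]
    · simp [σ]
  have := abs_expVal_sub_le_sqrt_sum_Jdiv hσ hρ hagree
    (fun j hj => by simpa [hσ_of_lt j hj] using hpos' j)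
    (fun j hj => by simpa [hρ_of_lt j hj] using hpos j) (hu i)
  rwa [sum_congr rfl fun j hj => by rw [hσ_of_lt j hj, hρ_of_lt j hj]] at this

theorem interleaved_cross_term_bound_general
    {N : ℕ} {A : Type*} [Fintype A] [DecidableEq A]
    (u : Fin N → (Fin N → A) → ℝ) (hu : ∀ i a, 0 ≤ u i a ∧ u i a ≤ 1)
    (π π' : Fin N → A → ℝ)
    (hdist : ∀ i, IsDist (π i)) (hdist' : ∀ i, IsDist (π' i))
    (hpos : ∀ i a, 0 < π i a) (hpos' : ∀ i a, 0 < π' i a) :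
    ∑ i : Fin N,
        |∑ a : A,
          (expVal (fun j => if j = i then pmfOf a else if j < i then π j else π' j)
              (u i) - margU u π i a) * (π' i a - π i a)| ≤
      Real.sqrt N * Jdiv (jointPmf π') (jointPmf π) := by
  set J := Jdiv (jointPmf π') (jointPmf π)
  have hJ : J = ∑ j, Jdiv (π' j) (π j) := Jdiv_jointPmf_s15 hdist' hdist hpos' hpos
  have hJ_nonneg : ∀ j, 0 ≤ Jdiv (π' j) (π j) := fun j => Jdiv_nonneg_s15 (hpos' j) (hpos j)
  have hclose : ∀ i a,
      |expVal (fun j => if j = i then pmfOf a else if j < i then π j else π' j) (u i) -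
        margU u π i a| ≤ √(J / 2) := fun i a => by
    refine (abs_expVal_interleaved_sub_margU_le u hu hdist hdist' hpos hpos' i a).trans ?_
    have hsub : ∑ j ∈ Ioi i, Jdiv (π' j) (π j) ≤ J :=
      hJ ▸ sum_le_sum_of_subset_of_nonneg (subset_univ _) fun j _ _ => hJ_nonneg j
    gcongr
  have hL1 : ∀ i, ∑ a, |π' i a - π i a| ≤ √(2 * Jdiv (π' i) (π i)) := fun i =>
    sum_abs_sub_le_sqrt_two_mul_Jdiv_s15 (hpos' i) (hpos i) (hdist' i).2 (hdist i).2
  have hJ0 : 0 ≤ J := hJ ▸ sum_nonneg fun j _ => hJ_nonneg j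
  calc _ ≤ ∑ i, √(J / 2) * ∑ a, |π' i a - π i a| :=
        sum_le_sum fun i _ => abs_sum_mul_le_mul_sum_abs (hclose i)
    _ ≤ √(J / 2) * ∑ i, √(2 * Jdiv (π' i) (π i)) := by
        rw [mul_sum]
        gcongr with i
        exact hL1 i
    _ ≤ √(J / 2) * √(N * ∑ i, 2 * Jdiv (π' i) (π i)) := by
        gcongr
        simpa using sum_sqrt_le_sqrt_card_mul_sum fun i => mul_nonneg zero_le_two (hJ_nonneg i)
    _ = √N * J := by
        rw [← mul_sum, ← hJ, ← Real.sqrt_mul (by positivity),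
          show J / 2 * (N * (2 * J)) = N * J ^ 2 by ring, Real.sqrt_mul (Nat.cast_nonneg N),
          Real.sqrt_sq hJ0]

/-- Bound on the cross terms involving the interleaved marginalized utilities. -/
theorem interleaved_cross_term_bound
    {N : ℕ} (hN : 0 < N) {A : Type*} [Fintype A] [DecidableEq A] [Nonempty A]
    (u : Fin N → (Fin N → A) → ℝ) (hu : ∀ i a, 0 ≤ u i a ∧ u i a ≤ 1)
    (π π' : Fin N → A → ℝ)
    (hdist : ∀ i, IsDist (π i)) (hdist' : ∀ i, IsDist (π' i))
    (hpos : ∀ i a, 0 < π i a) (hpos' : ∀ i a, 0 < π' i a) :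
    ∑ i : Fin N,
        |∑ a : A,
          (expVal (fun j => if j = i then pmfOf a else if j < i then π j else π' j)
              (u i) - margU u π i a) * (π' i a - π i a)| ≤
      Real.sqrt N * Jdiv (jointPmf π') (jointPmf π) :=
  interleaved_cross_term_bound_general u hu π π' hdist hdist' hpos hpos'
end
end

section
/- For every positive integer n and all positive reals x_1, …, x_n, it holds that |∏_{i=1}^n x_i − 1 − Σ_{i=1}^n (x_i − 1)| ≤ (∏_{i=1}^n x_i − 1) · log(∏_{i=1}^n x_i) + Σ_{i=1}^n (x_i − 1) · log x_i. -/
/-! Both `P - 1 - log P` (for `P = ∏ xᵢ`) and `∑ (xᵢ - 1 - log xᵢ)` are nonnegative by the tangent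
line bound `log y ≤ y - 1`, and since `log P = ∑ log xᵢ` their difference is exactly
`P - 1 - ∑ (xᵢ - 1)`. The absolute value of a difference of nonnegative numbers is at most their
sum, and each gap `y - 1 - log y` is at most `(y - 1) log y` by the dual bound `1 - 1/y ≤ log y`. -/

open Finset Real

namespace Real

theorem sub_one_sub_log_nonneg {y : ℝ} (hy : 0 < y) : 0 ≤ y - 1 - log y :=
  sub_nonneg.mpr (log_le_sub_one_of_pos hy)

theorem sub_one_sub_log_le_mul_log {y : ℝ} (hy : 0 < y) : y - 1 - log y ≤ (y - 1) * log y := by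
  have h := mul_le_mul_of_nonneg_left (one_sub_inv_le_log_of_pos hy) hy.le
  rw [mul_sub, mul_one, mul_inv_cancel₀ hy.ne'] at h
  linarith

end Real

theorem abs_sub_le_add_of_nonneg {a b : ℝ} (ha : 0 ≤ a) (hb : 0 ≤ b) : |a - b| ≤ a + b := by
  simpa only [abs_of_nonneg ha, abs_of_nonneg hb] using abs_sub a b

theorem prod_sub_one_sub_sum_eq_sub {ι : Type*} (s : Finset ι) {x : ι → ℝ}
    (hx : ∀ i ∈ s, 0 < x i) :
    (∏ i ∈ s, x i) - 1 - ∑ i ∈ s, (x i - 1) =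
      ((∏ i ∈ s, x i) - 1 - log (∏ i ∈ s, x i)) - ∑ i ∈ s, (x i - 1 - log (x i)) := by
  rw [log_prod fun i hi => (hx i hi).ne', sum_sub_distrib (f := fun i => x i - 1)]
  ring

theorem abs_prod_sub_one_sub_sum_le {ι : Type*} (s : Finset ι) {x : ι → ℝ}
    (hx : ∀ i ∈ s, 0 < x i) :
    |(∏ i ∈ s, x i) - 1 - ∑ i ∈ s, (x i - 1)| ≤
      ((∏ i ∈ s, x i) - 1) * log (∏ i ∈ s, x i) + ∑ i ∈ s, (x i - 1) * log (x i) := by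
  have hP : 0 < ∏ i ∈ s, x i := prod_pos hx
  rw [prod_sub_one_sub_sum_eq_sub s hx]
  calc _ ≤ ((∏ i ∈ s, x i) - 1 - log (∏ i ∈ s, x i)) + ∑ i ∈ s, (x i - 1 - log (x i)) :=
        abs_sub_le_add_of_nonneg (sub_one_sub_log_nonneg hP)
          (sum_nonneg fun i hi => sub_one_sub_log_nonneg (hx i hi))
    _ ≤ _ := add_le_add (sub_one_sub_log_le_mul_log hP)
          (sum_le_sum fun i hi => sub_one_sub_log_le_mul_log (hx i hi))

theorem prod_expansion_bound_general (n : ℕ) (x : Fin n → ℝ)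
    (hx : ∀ i, 0 < x i) :
    |(∏ i, x i) - 1 - ∑ i, (x i - 1)| ≤
      ((∏ i, x i) - 1) * Real.log (∏ i, x i) +
        ∑ i, (x i - 1) * Real.log (x i) :=
  abs_prod_sub_one_sub_sum_le univ fun i _ => hx i

/-- Elementary product-expansion inequality: for positive reals `x_1, …, x_n`,
`|∏ x_i − 1 − Σ (x_i − 1)| ≤ (∏ x_i − 1) log(∏ x_i) + Σ (x_i − 1) log x_i`. -/
theorem prod_expansion_bound (n : ℕ) (hn : 0 < n) (x : Fin n → ℝ)
    (hx : ∀ i, 0 < x i) :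
    |(∏ i, x i) - 1 - ∑ i, (x i - 1)| ≤
      ((∏ i, x i) - 1) * Real.log (∏ i, x i) +
        ∑ i, (x i - 1) * Real.log (x i) :=
  prod_expansion_bound_general n x hx
end
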